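/- arXiv:1801.06913 — 6 statements merged into one kernel-verified Lean document; each statement's English description precedes it below -/
import Mathlib

section
/- Let f, g, u : ℝ → ℂ be infinitely differentiable. Then [⟨f⟩₁, ⟨g⟩₁] u = ⟨f·g' − f'·g⟩₁ u, i.e. for every x ∈ ℝ, ⟨f⟩₁(⟨g⟩₁ u)(x) − ⟨g⟩₁(⟨f⟩₁ u)(x) = ⟨f·g' − f'·g⟩₁ u (x). -/
/-- The anti-commutator operator `⟨f⟩ₖ u = (1/2)(f·u⁽ᵏ⁾ + (f·u)⁽ᵏ⁾)`. -/
noncomputable def ang (k : ℕ) (f u : ℝ → ℂ) : ℝ → ℂ :=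
  fun x => (1/2 : ℂ) * (f x * iteratedDeriv k u x + iteratedDeriv k (f * u) x)

private lemma ang_one_eq (f u : ℝ → ℂ) (hf : ContDiff ℝ (⊤ : ℕ∞) f) (hu : ContDiff ℝ (⊤ : ℕ∞) u) :
    ang 1 f u = fun x => f x * deriv u x + (1/2 : ℂ) * (deriv f x * u x) := by
  funext x
  have h := deriv_fun_mul (hf.differentiable (by simp) x) (hu.differentiable (by simp) x)
  simp only [ang, iteratedDeriv_one]
  rw [show f * u = fun y => f y * u y from rfl, h]
  ring

private lemma deriv_contDiff {f : ℝ → ℂ} (hf : ContDiff ℝ (⊤ : ℕ∞) f) : ContDiff ℝ (⊤ : ℕ∞) (deriv f) := by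
  have h : ContDiff ℝ (((⊤ : ℕ∞) : WithTop ℕ∞) + 1) f := by rw [show ((⊤ : ℕ∞) : WithTop ℕ∞) + 1 = ((⊤ : ℕ∞) : WithTop ℕ∞) from rfl]; exact hf
  exact (contDiff_succ_iff_deriv.mp h).2.2

theorem commutator_ang1_ang1 (f g u : ℝ → ℂ)
    (hf : ContDiff ℝ (⊤ : ℕ∞) f) (hg : ContDiff ℝ (⊤ : ℕ∞) g) (hu : ContDiff ℝ (⊤ : ℕ∞) u) (x : ℝ) :
    ang 1 f (ang 1 g u) x - ang 1 g (ang 1 f u) x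
      = ang 1 (fun y => f y * deriv g y - deriv f y * g y) u x := by
  have hf' := deriv_contDiff hf
  have hg' := deriv_contDiff hg
  have hu' := deriv_contDiff hu
  have hA : ∀ (p : ℝ → ℂ), ContDiff ℝ (⊤ : ℕ∞) p →
      ContDiff ℝ (⊤ : ℕ∞) (fun y => p y * deriv u y + (1/2 : ℂ) * (deriv p y * u y)) := by
    intro p hp
    exact (hp.mul hu').add (contDiff_const.mul ((deriv_contDiff hp).mul hu))
  -- derivative of A p u
  have hderivA : ∀ (p : ℝ → ℂ), ContDiff ℝ (⊤ : ℕ∞) p →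
      deriv (fun y => p y * deriv u y + (1/2 : ℂ) * (deriv p y * u y)) x
        = (deriv p x * deriv u x + p x * deriv (deriv u) x)
          + (1/2 : ℂ) * (deriv (deriv p) x * u x + deriv p x * deriv u x) := by
    intro p hp
    have hp' := deriv_contDiff hp
    have d1 : HasDerivAt (fun y => p y * deriv u y)
        (deriv p x * deriv u x + p x * deriv (deriv u) x) x :=
      ((hp.differentiable (by simp) x).hasDerivAt.mul
        ((hu'.differentiable (by simp) x).hasDerivAt))
    have d2 : HasDerivAt (fun y => deriv p y * u y)
        (deriv (deriv p) x * u x + deriv p x * deriv u x) x :=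
      ((hp'.differentiable (by simp) x).hasDerivAt.mul
        ((hu.differentiable (by simp) x).hasDerivAt))
    exact (d1.add (d2.const_mul (1/2 : ℂ))).deriv
  have hFG : ContDiff ℝ (⊤ : ℕ∞) (fun y => f y * deriv g y - deriv f y * g y) :=
    (hf.mul hg').sub (hf'.mul hg)
  have hderivFG : deriv (fun y => f y * deriv g y - deriv f y * g y) x
      = (deriv f x * deriv g x + f x * deriv (deriv g) x)
        - (deriv (deriv f) x * g x + deriv f x * deriv g x) := by
    have d1 : HasDerivAt (fun y => f y * deriv g y)
        (deriv f x * deriv g x + f x * deriv (deriv g) x) x :=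
      ((hf.differentiable (by simp) x).hasDerivAt.mul
        ((hg'.differentiable (by simp) x).hasDerivAt))
    have d2 : HasDerivAt (fun y => deriv f y * g y)
        (deriv (deriv f) x * g x + deriv f x * deriv g x) x :=
      ((hf'.differentiable (by simp) x).hasDerivAt.mul
        ((hg.differentiable (by simp) x).hasDerivAt))
    exact (d1.sub d2).deriv
  rw [ang_one_eq g u hg hu, ang_one_eq f u hf hu,
      ang_one_eq f _ hf (hA g hg), ang_one_eq g _ hg (hA f hf),
      ang_one_eq _ u hFG hu]
  simp only [hderivA g hg, hderivA f hf, hderivFG]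
  ring
end

section
/- Let f, g, u : ℝ → ℂ be infinitely differentiable. Then [⟨f⟩₂, ⟨g⟩₁] u = ⟨2f·g' − f'·g⟩₂ u − (1/2)·⟨2f'·g'' + f·g'''⟩₀ u, i.e. for every x ∈ ℝ, ⟨f⟩₂(⟨g⟩₁ u)(x) − ⟨g⟩₁(⟨f⟩₂ u)(x) = ⟨2f·g' − f'·g⟩₂ u (x) − (1/2)(2f'(x)g''(x) + f(x)g'''(x))·u(x). -/
open scoped ContDiff

private lemma it2 (v : ℝ → ℂ) : iteratedDeriv 2 v = deriv (deriv v) := by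
  rw [show (2:ℕ) = 1+1 from rfl, iteratedDeriv_succ, iteratedDeriv_one]

private lemma it3 (v : ℝ → ℂ) : iteratedDeriv 3 v = deriv (deriv (deriv v)) := by
  rw [show (3:ℕ) = 2+1 from rfl, iteratedDeriv_succ, it2]

private lemma ang_def (k : ℕ) (f u : ℝ → ℂ) :
    ang k f u = fun x => (1/2 : ℂ) * (f x * iteratedDeriv k u x + iteratedDeriv k (f * u) x) := rfl

private lemma pmul (a b : ℝ → ℂ) : a * b = fun y => a y * b y := rfl

private lemma Dadd {a b : ℝ → ℂ} (ha : Differentiable ℝ a) (hb : Differentiable ℝ b) :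
    deriv (fun y => a y + b y) = fun y => deriv a y + deriv b y :=
  funext fun y => deriv_add (ha y) (hb y)

private lemma Dsub {a b : ℝ → ℂ} (ha : Differentiable ℝ a) (hb : Differentiable ℝ b) :
    deriv (fun y => a y - b y) = fun y => deriv a y - deriv b y :=
  funext fun y => deriv_sub (ha y) (hb y)

private lemma Dmul {a b : ℝ → ℂ} (ha : Differentiable ℝ a) (hb : Differentiable ℝ b) :
    deriv (fun y => a y * b y) = fun y => deriv a y * b y + a y * deriv b y :=
  funext fun y => deriv_mul (ha y) (hb y)

private lemma Dcmul (c : ℂ) {a : ℝ → ℂ} (ha : Differentiable ℝ a) :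
    deriv (fun y => c * a y) = fun y => c * deriv a y :=
  funext fun y => deriv_const_mul c (ha y)

theorem commutator_ang2_ang1 (f g u : ℝ → ℂ)
    (hf : ContDiff ℝ (⊤ : ℕ∞) f) (hg : ContDiff ℝ (⊤ : ℕ∞) g) (hu : ContDiff ℝ (⊤ : ℕ∞) u) (x : ℝ) :
    ang 2 f (ang 1 g u) x - ang 1 g (ang 2 f u) x
      = ang 2 (fun y => 2 * f y * deriv g y - deriv f y * g y) u x
        - (1/2 : ℂ) * (2 * deriv f x * iteratedDeriv 2 g x
            + f x * iteratedDeriv 3 g x) * u x := by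
  have sf : ContDiff ℝ ∞ f := hf.of_le (by simp)
  have sg : ContDiff ℝ ∞ g := hg.of_le (by simp)
  have su : ContDiff ℝ ∞ u := hu.of_le (by simp)
  have sf1 := (contDiff_infty_iff_deriv.mp sf).2
  have sf2 := (contDiff_infty_iff_deriv.mp sf1).2
  have sf3 := (contDiff_infty_iff_deriv.mp sf2).2
  have sg1 := (contDiff_infty_iff_deriv.mp sg).2
  have sg2 := (contDiff_infty_iff_deriv.mp sg1).2
  have sg3 := (contDiff_infty_iff_deriv.mp sg2).2
  have su1 := (contDiff_infty_iff_deriv.mp su).2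
  have su2 := (contDiff_infty_iff_deriv.mp su1).2
  have su3 := (contDiff_infty_iff_deriv.mp su2).2
  have Df : Differentiable ℝ f := sf.differentiable (by simp)
  have Dg : Differentiable ℝ g := sg.differentiable (by simp)
  have Du : Differentiable ℝ u := su.differentiable (by simp)
  have Df1 : Differentiable ℝ (deriv f) := sf1.differentiable (by simp)
  have Dg1 : Differentiable ℝ (deriv g) := sg1.differentiable (by simp)
  have Du1 : Differentiable ℝ (deriv u) := su1.differentiable (by simp)
  have Df2 : Differentiable ℝ (deriv (deriv f)) := sf2.differentiable (by simp)
  have Dg2 : Differentiable ℝ (deriv (deriv g)) := sg2.differentiable (by simp)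
  have Du2 : Differentiable ℝ (deriv (deriv u)) := su2.differentiable (by simp)
  have Df3 : Differentiable ℝ (deriv (deriv (deriv f))) := sf3.differentiable (by simp)
  have Dg3 : Differentiable ℝ (deriv (deriv (deriv g))) := sg3.differentiable (by simp)
  have Du3 : Differentiable ℝ (deriv (deriv (deriv u))) := su3.differentiable (by simp)
  simp only [ang_def, it2, it3, iteratedDeriv_one, pmul]
  simp (disch := fun_prop) only [Dcmul, Dmul, Dadd, Dsub, deriv_const']
  ring
end

section
/- Let f, g, u : ℝ → ℂ be infinitely differentiable. Then [⟨f⟩₂, ⟨g⟩₂] u = 2 ⟨f·g' − f'·g⟩₃ u + ⟨2f''·g' − 2f'·g'' + f'''·g − f·g'''⟩₁ u, as an identity of functions evaluated at every x ∈ ℝ. -/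
section helpers

variable {a b : ℝ → ℂ} {c : ℂ}

@[fun_prop] lemma smooth_deriv' (ha : ContDiff ℝ (⊤ : ℕ∞) a) : ContDiff ℝ (⊤ : ℕ∞) (deriv a) := by
  have h : ContDiff ℝ (((⊤ : ℕ∞) : WithTop ℕ∞) + 1) a := by simpa using ha
  exact (contDiff_succ_iff_deriv.mp h).2.2

lemma dmul (ha : ContDiff ℝ (⊤ : ℕ∞) a) (hb : ContDiff ℝ (⊤ : ℕ∞) b) :
    deriv (fun x => a x * b x) = fun x => deriv a x * b x + a x * deriv b x :=
  funext fun x => deriv_fun_mul ((ha.differentiable (by simp)).differentiableAt)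
    ((hb.differentiable (by simp)).differentiableAt)

lemma dadd (ha : ContDiff ℝ (⊤ : ℕ∞) a) (hb : ContDiff ℝ (⊤ : ℕ∞) b) :
    deriv (fun x => a x + b x) = fun x => deriv a x + deriv b x :=
  funext fun x => deriv_fun_add ((ha.differentiable (by simp)).differentiableAt)
    ((hb.differentiable (by simp)).differentiableAt)

lemma dsub (ha : ContDiff ℝ (⊤ : ℕ∞) a) (hb : ContDiff ℝ (⊤ : ℕ∞) b) :
    deriv (fun x => a x - b x) = fun x => deriv a x - deriv b x :=
  funext fun x => deriv_fun_sub ((ha.differentiable (by simp)).differentiableAt)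
    ((hb.differentiable (by simp)).differentiableAt)

lemma dconst (ha : ContDiff ℝ (⊤ : ℕ∞) a) :
    deriv (fun x => c * a x) = fun x => c * deriv a x :=
  funext fun x => deriv_const_mul c ((ha.differentiable (by simp)).differentiableAt)

lemma itd2 (a : ℝ → ℂ) : iteratedDeriv 2 a = deriv (deriv a) := by
  rw [show (2:ℕ) = 1 + 1 from rfl, iteratedDeriv_succ, iteratedDeriv_one]

lemma itd3 (a : ℝ → ℂ) : iteratedDeriv 3 a = deriv (deriv (deriv a)) := by
  rw [show (3:ℕ) = 2 + 1 from rfl, iteratedDeriv_succ, itd2]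

end helpers

set_option maxHeartbeats 4000000 in
theorem commutator_ang2_ang2 (f g u : ℝ → ℂ)
    (hf : ContDiff ℝ (⊤ : ℕ∞) f) (hg : ContDiff ℝ (⊤ : ℕ∞) g) (hu : ContDiff ℝ (⊤ : ℕ∞) u) (x : ℝ) :
    ang 2 f (ang 2 g u) x - ang 2 g (ang 2 f u) x
      = 2 * ang 3 (fun y => f y * deriv g y - deriv f y * g y) u x
        + ang 1 (fun y => 2 * iteratedDeriv 2 f y * deriv g y
            - 2 * deriv f y * iteratedDeriv 2 g y
            + iteratedDeriv 3 f y * g y - f y * iteratedDeriv 3 g y) u x := by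
  unfold ang
  simp only [Pi.mul_def, itd3, itd2, iteratedDeriv_one]
  simp (disch := fun_prop) only [dmul, dadd, dsub, dconst, deriv_const', mul_zero,
    zero_mul, add_zero, zero_add]
  ring
end

section
/- Let f, g, u : ℝ → ℂ be infinitely differentiable. Then [⟨f⟩₃, ⟨g⟩₀] u = 3 ⟨f·g'⟩₂ u − (1/2)·⟨3f'·g'' + f·g'''⟩₀ u, i.e. for every x ∈ ℝ, ⟨f⟩₃(⟨g⟩₀ u)(x) − ⟨g⟩₀(⟨f⟩₃ u)(x) = 3·⟨f·g'⟩₂ u (x) − (1/2)(3f'(x)g''(x) + f(x)g'''(x))·u(x). -/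
section aux
variable (f u : ℝ → ℂ)

lemma smooth_deriv (hf : ContDiff ℝ (⊤:ℕ∞) f) : ContDiff ℝ (⊤:ℕ∞) (deriv f) :=
  (contDiff_infty_iff_deriv.mp hf).2

lemma deriv_mul_fn (hf : ContDiff ℝ (⊤:ℕ∞) f) (hu : ContDiff ℝ (⊤:ℕ∞) u) :
    deriv (f * u) = deriv f * u + f * deriv u := by
  funext y
  simp only [Pi.add_apply, Pi.mul_apply]
  rw [show (f * u) = fun z => f z * u z from rfl]
  exact deriv_fun_mul (hf.differentiable (by simp) y)
    (hu.differentiable (by simp) y)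

lemma deriv_add_fn (a b : ℝ → ℂ) (ha : ContDiff ℝ (⊤:ℕ∞) a) (hb : ContDiff ℝ (⊤:ℕ∞) b) :
    deriv (a + b) = deriv a + deriv b := by
  funext y
  simp only [Pi.add_apply]
  rw [show (a + b) = fun z => a z + b z from rfl]
  exact deriv_fun_add (ha.differentiable (by simp) y)
    (hb.differentiable (by simp) y)

lemma d2_eq : deriv (deriv f) = iteratedDeriv 2 f := by
  rw [show iteratedDeriv 2 f = deriv (iteratedDeriv 1 f) from iteratedDeriv_succ,
    iteratedDeriv_one]

lemma d3_eq : deriv (iteratedDeriv 2 f) = iteratedDeriv 3 f :=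
  (iteratedDeriv_succ (n := 2)).symm

lemma iter2_mul (hf : ContDiff ℝ (⊤:ℕ∞) f) (hu : ContDiff ℝ (⊤:ℕ∞) u) :
    iteratedDeriv 2 (f * u) = iteratedDeriv 2 f * u + deriv f * deriv u
      + deriv f * deriv u + f * iteratedDeriv 2 u := by
  have hf' := smooth_deriv f hf
  have hu' := smooth_deriv u hu
  rw [← d2_eq (f * u), deriv_mul_fn f u hf hu,
    deriv_add_fn (deriv f * u) (f * deriv u) (hf'.mul hu) (hf.mul hu'),
    deriv_mul_fn (deriv f) u hf' hu, deriv_mul_fn f (deriv u) hf hu',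
    d2_eq f, d2_eq u]
  funext y
  simp only [Pi.add_apply, Pi.mul_apply]
  ring

lemma iter3_mul (hf : ContDiff ℝ (⊤:ℕ∞) f) (hu : ContDiff ℝ (⊤:ℕ∞) u) :
    iteratedDeriv 3 (f * u) = iteratedDeriv 3 f * u
      + iteratedDeriv 2 f * deriv u + iteratedDeriv 2 f * deriv u + iteratedDeriv 2 f * deriv u
      + deriv f * iteratedDeriv 2 u + deriv f * iteratedDeriv 2 u + deriv f * iteratedDeriv 2 u
      + f * iteratedDeriv 3 u := by
  have hf' := smooth_deriv f hf
  have hu' := smooth_deriv u hu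
  have hf2 : ContDiff ℝ (⊤:ℕ∞) (iteratedDeriv 2 f) := by
    rw [← d2_eq f]; exact smooth_deriv _ hf'
  have hu2 : ContDiff ℝ (⊤:ℕ∞) (iteratedDeriv 2 u) := by
    rw [← d2_eq u]; exact smooth_deriv _ hu'
  rw [show iteratedDeriv 3 (f * u) = deriv (iteratedDeriv 2 (f * u)) from iteratedDeriv_succ,
    iter2_mul f u hf hu,
    deriv_add_fn (iteratedDeriv 2 f * u + deriv f * deriv u + deriv f * deriv u)
      (f * iteratedDeriv 2 u) (((hf2.mul hu).add (hf'.mul hu')).add (hf'.mul hu')) (hf.mul hu2),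
    deriv_add_fn (iteratedDeriv 2 f * u + deriv f * deriv u) (deriv f * deriv u)
      ((hf2.mul hu).add (hf'.mul hu')) (hf'.mul hu'),
    deriv_add_fn (iteratedDeriv 2 f * u) (deriv f * deriv u) (hf2.mul hu) (hf'.mul hu'),
    deriv_mul_fn (iteratedDeriv 2 f) u hf2 hu, deriv_mul_fn (deriv f) (deriv u) hf' hu',
    deriv_mul_fn f (iteratedDeriv 2 u) hf hu2, d3_eq f, d3_eq u, d2_eq f, d2_eq u]
  funext y
  simp only [Pi.add_apply, Pi.mul_apply]
  ring
end aux

theorem commutator_ang3_ang0 (f g u : ℝ → ℂ)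
    (hf : ContDiff ℝ (⊤ : ℕ∞) f) (hg : ContDiff ℝ (⊤ : ℕ∞) g) (hu : ContDiff ℝ (⊤ : ℕ∞) u) (x : ℝ) :
    ang 3 f (ang 0 g u) x - ang 0 g (ang 3 f u) x
      = 3 * ang 2 (fun y => f y * deriv g y) u x
        - (1/2 : ℂ) * (3 * deriv f x * iteratedDeriv 2 g x
            + f x * iteratedDeriv 3 g x) * u x := by
  have hf' : ContDiff ℝ (⊤:ℕ∞) f := hf.of_le (by simp)
  have hg' : ContDiff ℝ (⊤:ℕ∞) g := hg.of_le (by simp)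
  have hu' : ContDiff ℝ (⊤:ℕ∞) u := hu.of_le (by simp)
  have hgu : ContDiff ℝ (⊤:ℕ∞) (g * u) := hg'.mul hu'
  have hdg := smooth_deriv g hg'
  have hfg : ContDiff ℝ (⊤:ℕ∞) (f * deriv g) := hf'.mul hdg
  have hang0 : ang 0 g u = g * u := by
    funext y; simp [ang, iteratedDeriv_zero, Pi.mul_apply]
    ring
  have hfun : (fun y => f y * deriv g y) = f * deriv g := rfl
  have h2g : iteratedDeriv 2 (deriv g) = iteratedDeriv 3 g := by
    rw [← d3_eq g, ← d2_eq g, ← d2_eq (deriv g)]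
  simp only [ang, hang0, hfun, iteratedDeriv_zero, Pi.mul_apply]
  rw [iter3_mul f (g*u) hf' hgu, iter3_mul g u hg' hu', iter3_mul f u hf' hu',
    iter2_mul (f * deriv g) u hfg hu', iter2_mul f (deriv g) hf' hdg,
    deriv_mul_fn g u hg' hu', deriv_mul_fn f (deriv g) hf' hdg,
    iter2_mul g u hg' hu', h2g, d2_eq g]
  simp only [Pi.add_apply, Pi.mul_apply]
  ring
end

section
/- Let h ≥ 0 and let f₁, f₂, f₃ : ℝ → ℂ be continuous on [0, h]. Then ∫₀ʰ f₁(ζ) (∫₀^ζ f₂(ξ) dξ) (∫₀^ζ f₃(ξ) dξ) dζ = ∫₀ʰ (∫_ξ^h f₁(ζ) dζ) (f₂(ξ) ∫₀^ξ f₃(η) dη + f₃(ξ) ∫₀^ξ f₂(η) dη) dξ. -/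
/-!
Integrate by parts `f₁ · (F G)`, where `F`, `G` are the primitives of `f₂`, `f₃` vanishing at `0`,
taking `ξ ↦ -∫_ξ^h f₁` as the primitive of `f₁`: it vanishes at `h` and `F G` vanishes at `0`, so
no boundary terms survive, and `(F G)' = f₂ G + f₃ F`.
-/

open MeasureTheory Set intervalIntegral
open scoped Interval

section

variable {E : Type*} [NormedAddCommGroup E] [NormedSpace ℝ E] [CompleteSpace E]

theorem ContinuousOn.hasDerivAt_integral_of_mem_Ioo {f : ℝ → E} {a b x : ℝ}
    (hf : ContinuousOn f [[a, b]]) (hx : x ∈ Ioo (min a b) (max a b)) :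
    HasDerivAt (fun u => ∫ t in a..u, f t) (f x) x := by
  have hfo : ContinuousOn f (Ioo (min a b) (max a b)) := hf.mono Ioo_subset_Icc_self
  have hax : [[a, x]] ⊆ [[a, b]] := uIcc_subset_uIcc_left (Ioo_subset_Icc_self hx)
  exact integral_hasDerivAt_right (hf.mono hax).intervalIntegrable
    (hfo.stronglyMeasurableAtFilter isOpen_Ioo x hx) (hfo.continuousAt (isOpen_Ioo.mem_nhds hx))

end

section

variable {A : Type*} [NormedCommRing A] [NormedAlgebra ℝ A] [CompleteSpace A]

theorem integral_mul_eq_integral_integral_mul_deriv {f U U' : ℝ → A} {a b : ℝ}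
    (hf : ContinuousOn f [[a, b]]) (hU : ContinuousOn U [[a, b]])
    (hUU' : ∀ x ∈ Ioo (min a b) (max a b), HasDerivAt U (U' x) x)
    (hU' : IntervalIntegrable U' volume a b) (hUa : U a = 0) :
    ∫ x in a..b, f x * U x = ∫ x in a..b, (∫ t in x..b, f t) * U' x := by
  have hf' : ContinuousOn f [[b, a]] := uIcc_comm a b ▸ hf
  have hV : ContinuousOn (fun x => ∫ t in b..x, f t) [[a, b]] :=
    uIcc_comm a b ▸ continuousOn_primitive_interval (hf'.integrableOn_compact isCompact_uIcc)
  have hVV' : ∀ x ∈ Ioo (min a b) (max a b), HasDerivAt (fun u => ∫ t in b..u, f t) (f x) x :=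
    fun x hx => hf'.hasDerivAt_integral_of_mem_Ioo (by rwa [min_comm, max_comm])
  calc ∫ x in a..b, f x * U x = ∫ x in a..b, U x * f x := by simp_rw [mul_comm]
    _ = -∫ x in a..b, U' x * ∫ t in b..x, f t := by
      rw [integral_mul_deriv_eq_deriv_mul_of_hasDerivAt hU hV hUU' hVV' hU'
        hf.intervalIntegrable]
      simp [hUa]
    _ = ∫ x in a..b, (∫ t in x..b, f t) * U' x := by
      rw [← intervalIntegral.integral_neg]
      congr 1 with x
      rw [integral_symm x b]
      ring

theorem integral_mul_primitive_mul_primitive {f₁ f₂ f₃ : ℝ → A} {a b : ℝ}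
    (hf₁ : ContinuousOn f₁ [[a, b]]) (hf₂ : ContinuousOn f₂ [[a, b]])
    (hf₃ : ContinuousOn f₃ [[a, b]]) :
    ∫ ζ in a..b, f₁ ζ * (∫ ξ in a..ζ, f₂ ξ) * (∫ ξ in a..ζ, f₃ ξ)
      = ∫ ξ in a..b, (∫ ζ in ξ..b, f₁ ζ) *
          (f₂ ξ * (∫ η in a..ξ, f₃ η) + f₃ ξ * (∫ η in a..ξ, f₂ η)) := by
  set F := fun x => ∫ t in a..x, f₂ t
  set G := fun x => ∫ t in a..x, f₃ t
  have hF : ContinuousOn F [[a, b]] :=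
    continuousOn_primitive_interval (hf₂.integrableOn_compact isCompact_uIcc)
  have hG : ContinuousOn G [[a, b]] :=
    continuousOn_primitive_interval (hf₃.integrableOn_compact isCompact_uIcc)
  have hFG' : ∀ x ∈ Ioo (min a b) (max a b),
      HasDerivAt (fun x => F x * G x) (f₂ x * G x + f₃ x * F x) x := fun x hx =>
    ((hf₂.hasDerivAt_integral_of_mem_Ioo hx).mul
      (hf₃.hasDerivAt_integral_of_mem_Ioo hx)).congr_deriv (by ring)
  simp_rw [mul_assoc (f₁ _)]
  exact integral_mul_eq_integral_integral_mul_deriv hf₁ (hF.mul hG) hFG'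
    ((hf₂.mul hG).add (hf₃.mul hF)).intervalIntegrable (by simp)

end

theorem integral_identity_pyramid (h : ℝ) (hh : 0 ≤ h) (f₁ f₂ f₃ : ℝ → ℂ)
    (hf₁ : ContinuousOn f₁ (Set.Icc 0 h)) (hf₂ : ContinuousOn f₂ (Set.Icc 0 h))
    (hf₃ : ContinuousOn f₃ (Set.Icc 0 h)) :
    ∫ ζ in (0:ℝ)..h, f₁ ζ * (∫ ξ in (0:ℝ)..ζ, f₂ ξ) * (∫ ξ in (0:ℝ)..ζ, f₃ ξ)
      = ∫ ξ in (0:ℝ)..h, (∫ ζ in ξ..h, f₁ ζ) *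
          (f₂ ξ * (∫ η in (0:ℝ)..ξ, f₃ η) + f₃ ξ * (∫ η in (0:ℝ)..ξ, f₂ η)) := by
  rw [← uIcc_of_le hh] at hf₁ hf₂ hf₃
  exact integral_mul_primitive_mul_primitive hf₁ hf₂ hf₃
end

section
/- Let V : ℝ × ℝ → ℂ be infinitely differentiable (jointly in space and time), let u : ℝ → ℂ be infinitely differentiable, let h ≥ 0, and for each t ∈ ℝ define the operator A(t) acting on smooth functions w : ℝ → ℂ by (A(t) w)(x) = i·w''(x) − i·V(x, t)·w(x). Then the second Magnus term with simplified commutators satisfies, for every x ∈ ℝ, −(1/2) ∫₀ʰ ∫₀^ζ ( A(ξ)(A(ζ)u)(x) − A(ζ)(A(ξ)u)(x) ) dξ dζ = −2 · (1/2)( w(x)·u'(x) + (w·u)'(x) ), where w : ℝ → ℂ is defined by w(x) = ∫₀ʰ (ζ − h/2) · ∂ₓV(x, ζ) dζ (so the right-hand side equals −2⟨w⟩₁ u evaluated at x). -/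
open scoped ContDiff
open MeasureTheory intervalIntegral

lemma iteratedDeriv_two_eq' (f : ℝ → ℂ) : iteratedDeriv 2 f = deriv (deriv f) := by
  rw [iteratedDeriv_eq_iterate]; rfl

lemma aux_key (g : ℝ → ℂ) (hg : Continuous g) (h : ℝ) :
    (∫ ζ in (0:ℝ)..h, ((ζ:ℂ) * g ζ - ∫ ξ in (0:ℝ)..ζ, g ξ))
      = 2 * ∫ ζ in (0:ℝ)..h, ((ζ - h/2 : ℝ):ℂ) * g ζ := by
  set G : ℝ → ℂ := fun ζ => ∫ ξ in (0:ℝ)..ζ, g ξ with hGdef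
  have hGd : ∀ ζ, HasDerivAt G (g ζ) ζ := fun ζ => (hg.integral_hasStrictDerivAt 0 ζ).hasDerivAt
  have hGc : Continuous G := by
    rw [continuous_iff_continuousAt]; exact fun ζ => (hGd ζ).continuousAt
  have hvd : ∀ ζ : ℝ, HasDerivAt (fun t : ℝ => (t:ℂ)) 1 ζ := fun ζ => by
    simpa using (hasDerivAt_id ζ).ofReal_comp
  have hcg : Continuous fun ζ : ℝ => (ζ:ℂ) * g ζ :=
    (Complex.continuous_ofReal).mul hg
  have ibp : (∫ ζ in (0:ℝ)..h, G ζ * 1)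
      = G h * (h:ℂ) - G 0 * ((0:ℝ):ℂ) - ∫ ζ in (0:ℝ)..h, g ζ * (ζ:ℂ) :=
    intervalIntegral.integral_mul_deriv_eq_deriv_mul
      (fun ζ _ => hGd ζ) (fun ζ _ => hvd ζ)
      (hg.intervalIntegrable _ _) ((continuous_const).intervalIntegrable _ _)
  have hG0 : G 0 = 0 := by simp [hGdef]
  have e1 : (∫ ζ in (0:ℝ)..h, g ζ * (ζ:ℂ)) = ∫ ζ in (0:ℝ)..h, (ζ:ℂ) * g ζ := by
    apply intervalIntegral.integral_congr; intro ζ _; exact mul_comm _ _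
  have e2 : (∫ ζ in (0:ℝ)..h, G ζ * 1) = ∫ ζ in (0:ℝ)..h, G ζ := by
    apply intervalIntegral.integral_congr; intro ζ _; exact mul_one _
  have hsplit : (∫ ζ in (0:ℝ)..h, ((ζ:ℂ) * g ζ - G ζ))
      = (∫ ζ in (0:ℝ)..h, (ζ:ℂ) * g ζ) - ∫ ζ in (0:ℝ)..h, G ζ :=
    intervalIntegral.integral_sub (hcg.intervalIntegrable _ _) (hGc.intervalIntegrable _ _)
  have hrhs : (∫ ζ in (0:ℝ)..h, ((ζ - h/2 : ℝ):ℂ) * g ζ)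
      = (∫ ζ in (0:ℝ)..h, (ζ:ℂ) * g ζ) - ((h/2 : ℝ):ℂ) * ∫ ζ in (0:ℝ)..h, g ζ := by
    rw [← intervalIntegral.integral_const_mul, ← intervalIntegral.integral_sub
      (hcg.intervalIntegrable _ _) (Continuous.intervalIntegrable (u := fun ζ => ((h/2:ℝ):ℂ) * g ζ) (continuous_const.mul hg) _ _)]
    apply intervalIntegral.integral_congr; intro ζ _
    push_cast; ring
  rw [hsplit, ← e2, ibp, hG0, e1, hrhs]
  push_cast
  ring

lemma deriv2_mul (f g : ℝ → ℂ) (hf : ContDiff ℝ ∞ f) (hg : ContDiff ℝ ∞ g) (x : ℝ) :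
    iteratedDeriv 2 (fun y => f y * g y) x
      = iteratedDeriv 2 f x * g x + 2 * deriv f x * deriv g x + f x * iteratedDeriv 2 g x := by
  have hfd : Differentiable ℝ f := hf.differentiable (by simp)
  have hgd : Differentiable ℝ g := hg.differentiable (by simp)
  have hf' : ContDiff ℝ ∞ (deriv f) := (contDiff_infty_iff_deriv.mp hf).2
  have hg' : ContDiff ℝ ∞ (deriv g) := (contDiff_infty_iff_deriv.mp hg).2
  have h1 : deriv (fun y => f y * g y) = fun y => deriv f y * g y + f y * deriv g y :=
    funext fun y => deriv_mul (hfd y) (hgd y)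
  rw [iteratedDeriv_two_eq', iteratedDeriv_two_eq', iteratedDeriv_two_eq', h1]
  rw [deriv_fun_add (((hf'.differentiable (by simp) x).fun_mul (hgd x)))
      ((hfd x).fun_mul (hg'.differentiable (by simp) x)),
    deriv_fun_mul (hf'.differentiable (by simp) x) (hgd x),
    deriv_fun_mul (hfd x) (hg'.differentiable (by simp) x)]
  ring

lemma deriv2_comb (c : ℂ) (f g : ℝ → ℂ) (hf : ContDiff ℝ ∞ f) (hg : ContDiff ℝ ∞ g) (x : ℝ) :
    iteratedDeriv 2 (fun y => c * f y - c * g y) x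
      = c * iteratedDeriv 2 f x - c * iteratedDeriv 2 g x := by
  have hfd : Differentiable ℝ f := hf.differentiable (by simp)
  have hgd : Differentiable ℝ g := hg.differentiable (by simp)
  have hf' : ContDiff ℝ ∞ (deriv f) := (contDiff_infty_iff_deriv.mp hf).2
  have hg' : ContDiff ℝ ∞ (deriv g) := (contDiff_infty_iff_deriv.mp hg).2
  have h1 : deriv (fun y => c * f y - c * g y) = fun y => c * deriv f y - c * deriv g y := by
    funext y
    rw [deriv_fun_sub ((hfd y).const_mul c) ((hgd y).const_mul c),
      deriv_const_mul c (hfd y), deriv_const_mul c (hgd y)]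
  rw [iteratedDeriv_two_eq', iteratedDeriv_two_eq', iteratedDeriv_two_eq', h1,
    deriv_fun_sub ((hf'.differentiable (by simp) x).const_mul c)
      ((hg'.differentiable (by simp) x).const_mul c),
    deriv_const_mul c (hf'.differentiable (by simp) x),
    deriv_const_mul c (hg'.differentiable (by simp) x)]

theorem magnus_second_term_simplified (V : ℝ × ℝ → ℂ) (hV : ContDiff ℝ (⊤ : ℕ∞) V)
    (u : ℝ → ℂ) (hu : ContDiff ℝ (⊤ : ℕ∞) u) (h : ℝ) (hh : 0 ≤ h)
    (A : ℝ → (ℝ → ℂ) → ℝ → ℂ)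
    (hA : ∀ t w x, A t w x = Complex.I * iteratedDeriv 2 w x - Complex.I * V (x, t) * w x)
    (w : ℝ → ℂ)
    (hw : ∀ x, w x = ∫ ζ in (0:ℝ)..h, ((ζ - h / 2 : ℝ) : ℂ) * deriv (fun y => V (y, ζ)) x)
    (x : ℝ) :
    -(1/2 : ℂ) * (∫ ζ in (0:ℝ)..h, ∫ ξ in (0:ℝ)..ζ, (A ξ (A ζ u) x - A ζ (A ξ u) x))
      = -2 * ((1/2 : ℂ) * (w x * deriv u x + deriv (w * u) x)) := by
  have hV' : ContDiff ℝ ∞ V := hV.of_le (by simp)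
  have hu' : ContDiff ℝ ∞ u := hu.of_le (by simp)
  have hinfty : (∞ : WithTop ℕ∞) + 1 ≤ ∞ := by
    exact_mod_cast le_top
  set P1 : ℝ × ℝ → ℂ := fun p => fderiv ℝ V p (1, 0) with hP1def
  have hP1 : ContDiff ℝ ∞ P1 := (hV'.fderiv_right hinfty).clm_apply contDiff_const
  set P2 : ℝ × ℝ → ℂ := fun p => fderiv ℝ P1 p (1, 0) with hP2def
  have hP2 : ContDiff ℝ ∞ P2 := (hP1.fderiv_right hinfty).clm_apply contDiff_const
  have hd1 : ∀ t y, HasDerivAt (fun z => V (z, t)) (P1 (y, t)) y := by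
    intro t y
    have h1 : HasDerivAt (fun z : ℝ => (z, t)) ((1:ℝ), (0:ℝ)) y :=
      (hasDerivAt_id y).prodMk (hasDerivAt_const y t)
    exact (hV'.differentiable (by simp) (y, t)).hasFDerivAt.comp_hasDerivAt y h1
  have hd2 : ∀ t y, HasDerivAt (fun z => P1 (z, t)) (P2 (y, t)) y := by
    intro t y
    have h1 : HasDerivAt (fun z : ℝ => (z, t)) ((1:ℝ), (0:ℝ)) y :=
      (hasDerivAt_id y).prodMk (hasDerivAt_const y t)
    exact (hP1.differentiable (by simp) (y, t)).hasFDerivAt.comp_hasDerivAt y h1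
  have hVt : ∀ t, ContDiff ℝ ∞ (fun y => V (y, t)) :=
    fun t => hV'.comp (contDiff_id.prodMk contDiff_const)
  have derivVt : ∀ t, deriv (fun y => V (y, t)) = fun y => P1 (y, t) :=
    fun t => funext fun y => (hd1 t y).deriv
  have iter2Vt : ∀ t y, iteratedDeriv 2 (fun z => V (z, t)) y = P2 (y, t) := by
    intro t y
    rw [iteratedDeriv_two_eq', derivVt t]
    exact (hd2 t y).deriv
  have hu2 : ContDiff ℝ ∞ (iteratedDeriv 2 u) := by
    rw [iteratedDeriv_eq_iterate]; exact ContDiff.iterate_deriv 2 hu'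
  have hVu : ∀ t, ContDiff ℝ ∞ (fun y => V (y, t) * u y) := fun t => (hVt t).mul hu'
  -- pointwise commutator computation
  have hiter : ∀ t, iteratedDeriv 2 (A t u) x
      = Complex.I * iteratedDeriv 2 (iteratedDeriv 2 u) x
        - Complex.I * (P2 (x, t) * u x + 2 * P1 (x, t) * deriv u x
            + V (x, t) * iteratedDeriv 2 u x) := by
    intro t
    have h0 : A t u = fun y => Complex.I * iteratedDeriv 2 u y - Complex.I * (V (y, t) * u y) :=
      funext fun y => by rw [hA]; ring
    rw [h0, deriv2_comb Complex.I _ _ hu2 (hVu t), deriv2_mul _ _ (hVt t) hu',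
      iter2Vt t x, (hd1 t x).deriv]
  have key_pt : ∀ ξ ζ : ℝ, A ξ (A ζ u) x - A ζ (A ξ u) x
      = (P2 (x, ζ) - P2 (x, ξ)) * u x + 2 * (P1 (x, ζ) - P1 (x, ξ)) * deriv u x := by
    intro ξ ζ
    rw [hA ξ (A ζ u) x, hA ζ (A ξ u) x, hiter ξ, hiter ζ, hA ζ u x, hA ξ u x]
    linear_combination (-((P2 (x, ζ) - P2 (x, ξ)) * u x
      + 2 * (P1 (x, ζ) - P1 (x, ξ)) * deriv u x)) * Complex.I_sq
  -- the integrals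
  set g1 : ℝ → ℂ := fun t => P1 (x, t) with hg1def
  set g2 : ℝ → ℂ := fun t => P2 (x, t) with hg2def
  have hg1 : Continuous g1 := hP1.continuous.comp (continuous_const.prodMk continuous_id)
  have hg2 : Continuous g2 := hP2.continuous.comp (continuous_const.prodMk continuous_id)
  have hG1c : Continuous (fun ζ => ∫ ξ in (0:ℝ)..ζ, g1 ξ) := by
    rw [continuous_iff_continuousAt]
    exact fun ζ => ((hg1.integral_hasStrictDerivAt 0 ζ).hasDerivAt).continuousAt
  have hG2c : Continuous (fun ζ => ∫ ξ in (0:ℝ)..ζ, g2 ξ) := by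
    rw [continuous_iff_continuousAt]
    exact fun ζ => ((hg2.integral_hasStrictDerivAt 0 ζ).hasDerivAt).continuousAt
  have inner : ∀ ζ : ℝ, (∫ ξ in (0:ℝ)..ζ, (A ξ (A ζ u) x - A ζ (A ξ u) x))
      = ((ζ:ℂ) * g2 ζ - ∫ ξ in (0:ℝ)..ζ, g2 ξ) * u x
        + 2 * ((ζ:ℂ) * g1 ζ - ∫ ξ in (0:ℝ)..ζ, g1 ξ) * deriv u x := by
    intro ζ
    have e : (∫ ξ in (0:ℝ)..ζ, (A ξ (A ζ u) x - A ζ (A ξ u) x))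
        = ∫ ξ in (0:ℝ)..ζ, ((g2 ζ - g2 ξ) * u x + (2 * (g1 ζ - g1 ξ)) * deriv u x) := by
      apply intervalIntegral.integral_congr
      intro ξ _
      simp only [key_pt, hg1def, hg2def]
      try ring
    rw [e, intervalIntegral.integral_add
        (Continuous.intervalIntegrable (u := fun ξ => (g2 ζ - g2 ξ) * u x) ((continuous_const.sub hg2).mul continuous_const) _ _)
        (Continuous.intervalIntegrable (u := fun ξ => (2 * (g1 ζ - g1 ξ)) * deriv u x) ((continuous_const.mul (continuous_const.sub hg1)).mul
          continuous_const) _ _),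
      intervalIntegral.integral_mul_const, intervalIntegral.integral_mul_const,
      intervalIntegral.integral_sub (continuous_const.intervalIntegrable _ _)
        (hg2.intervalIntegrable _ _),
      intervalIntegral.integral_const_mul,
      intervalIntegral.integral_sub (continuous_const.intervalIntegrable _ _)
        (hg1.intervalIntegrable _ _),
      intervalIntegral.integral_const, intervalIntegral.integral_const]
    simp only [sub_zero, Complex.real_smul]
    try ring
  have outer : (∫ ζ in (0:ℝ)..h, ∫ ξ in (0:ℝ)..ζ, (A ξ (A ζ u) x - A ζ (A ξ u) x))
      = (∫ ζ in (0:ℝ)..h, ((ζ:ℂ) * g2 ζ - ∫ ξ in (0:ℝ)..ζ, g2 ξ)) * u x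
        + 2 * (∫ ζ in (0:ℝ)..h, ((ζ:ℂ) * g1 ζ - ∫ ξ in (0:ℝ)..ζ, g1 ξ)) * deriv u x := by
    have e : (∫ ζ in (0:ℝ)..h, ∫ ξ in (0:ℝ)..ζ, (A ξ (A ζ u) x - A ζ (A ξ u) x))
        = ∫ ζ in (0:ℝ)..h, (((ζ:ℂ) * g2 ζ - ∫ ξ in (0:ℝ)..ζ, g2 ξ) * u x
            + (2 * ((ζ:ℂ) * g1 ζ - ∫ ξ in (0:ℝ)..ζ, g1 ξ)) * deriv u x) := by
      apply intervalIntegral.integral_congr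
      intro ζ _
      simp only []
      rw [inner ζ]
      try ring
    have c2 : Continuous fun ζ : ℝ => (ζ:ℂ) * g2 ζ - ∫ ξ in (0:ℝ)..ζ, g2 ξ :=
      (Complex.continuous_ofReal.mul hg2).sub hG2c
    have c1 : Continuous fun ζ : ℝ => (ζ:ℂ) * g1 ζ - ∫ ξ in (0:ℝ)..ζ, g1 ξ :=
      (Complex.continuous_ofReal.mul hg1).sub hG1c
    rw [e, intervalIntegral.integral_add
        (Continuous.intervalIntegrable (u := fun ζ => ((ζ:ℂ) * g2 ζ - ∫ ξ in (0:ℝ)..ζ, g2 ξ) * u x) (c2.mul continuous_const) _ _)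
        (Continuous.intervalIntegrable (u := fun ζ => (2 * ((ζ:ℂ) * g1 ζ - ∫ ξ in (0:ℝ)..ζ, g1 ξ)) * deriv u x) ((continuous_const.mul c1).mul continuous_const) _ _),
      intervalIntegral.integral_mul_const, intervalIntegral.integral_mul_const,
      intervalIntegral.integral_const_mul]
  -- derivative of w
  set W1 : ℂ := ∫ ζ in (0:ℝ)..h, ((ζ - h/2 : ℝ):ℂ) * P1 (x, ζ) with hW1def
  set W2 : ℂ := ∫ ζ in (0:ℝ)..h, ((ζ - h/2 : ℝ):ℂ) * P2 (x, ζ) with hW2def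
  have hww : w = fun y => ∫ ζ in (0:ℝ)..h, ((ζ - h/2 : ℝ):ℂ) * P1 (y, ζ) := by
    funext y
    rw [hw y]
    apply intervalIntegral.integral_congr
    intro ζ _
    simp only [(hd1 ζ y).deriv]
  -- bound for dominated convergence
  have hcont : Continuous fun p : ℝ × ℝ => ((p.2 - h/2 : ℝ):ℂ) * P2 p :=
    (Complex.continuous_ofReal.comp (continuous_snd.sub continuous_const)).mul hP2.continuous
  obtain ⟨C, hC⟩ : ∃ C : ℝ, ∀ p ∈ (Metric.closedBall x 1) ×ˢ (Set.uIcc (0:ℝ) h),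
      ‖((p.2 - h/2 : ℝ):ℂ) * P2 p‖ ≤ C :=
    ((isCompact_closedBall x 1).prod isCompact_uIcc).exists_bound_of_continuousOn
      hcont.continuousOn
  have hdw : HasDerivAt w W2 x := by
    rw [hww, hW2def]
    have := intervalIntegral.hasDerivAt_integral_of_dominated_loc_of_deriv_le
      (F := fun y ζ => ((ζ - h/2 : ℝ):ℂ) * P1 (y, ζ))
      (F' := fun y ζ => ((ζ - h/2 : ℝ):ℂ) * P2 (y, ζ))
      (x₀ := x) (a := 0) (b := h) (s := Metric.ball x 1) (bound := fun _ => C) (μ := MeasureTheory.volume)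
      (Metric.ball_mem_nhds x one_pos)
      (Filter.Eventually.of_forall fun y =>
        (((Complex.continuous_ofReal.comp (continuous_id.sub continuous_const)).mul
          (hP1.continuous.comp (continuous_const.prodMk continuous_id))).aestronglyMeasurable))
      (((Complex.continuous_ofReal.comp (continuous_id.sub continuous_const)).mul
          (hP1.continuous.comp (continuous_const.prodMk continuous_id))).intervalIntegrable _ _)
      (((Complex.continuous_ofReal.comp (continuous_id.sub continuous_const)).mul
          (hP2.continuous.comp (continuous_const.prodMk continuous_id))).aestronglyMeasurable)
      (Filter.Eventually.of_forall fun t ht y hy => by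
        exact hC (y, t) ⟨Metric.ball_subset_closedBall hy, Set.uIoc_subset_uIcc ht⟩)
      (intervalIntegrable_const)
      (Filter.Eventually.of_forall fun t ht y hy => (hd2 t y).const_mul _)
    exact this.2
  have hwx : w x = W1 := by rw [hww]
  have hderivwu : deriv (w * u) x = W2 * u x + W1 * deriv u x := by
    have hud : HasDerivAt u (deriv u x) x :=
      (hu'.differentiable (by simp) x).hasDerivAt
    have := (hdw.mul hud).deriv
    rw [this, hwx]
  rw [outer, aux_key g1 hg1 h, aux_key g2 hg2 h, hderivwu, hwx]
  have e1 : (∫ ζ in (0:ℝ)..h, ((ζ - h/2 : ℝ):ℂ) * g1 ζ) = W1 := rfl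
  have e2 : (∫ ζ in (0:ℝ)..h, ((ζ - h/2 : ℝ):ℂ) * g2 ζ) = W2 := rfl
  rw [e1, e2]
  ring
end
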